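/- arXiv:1306.2517 — 7 statements merged into one kernel-verified Lean document; each statement's English description precedes it below -/
import Mathlib

section
/- Let h : ℝ → ℝ be a smooth periodic function (with some period L > 0) satisfying the ODE h'(x) = (1/2) h(x)² + Λ for all x, where Λ ≥ 0 is a constant. Then h is identically zero and Λ = 0. -/
theorem stmt_0 (h : ℝ → ℝ) (Λ : ℝ) (hΛ : 0 ≤ Λ)
    (hsmooth : ContDiff ℝ (⊤ : ℕ∞) h) (L : ℝ) (hL : 0 < L)
    (hper : Function.Periodic h L)
    (hode : ∀ x : ℝ, deriv h x = (1/2) * (h x)^2 + Λ) :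
    (∀ x : ℝ, h x = 0) ∧ Λ = 0 := by
  have hdiff : Differentiable ℝ h := hsmooth.differentiable (by simp)
  have hmono : Monotone h := by
    apply monotone_of_deriv_nonneg hdiff
    intro x
    rw [hode x]
    nlinarith [sq_nonneg (h x)]
  have hderiv0 : ∀ x, deriv h x = 0 := by
    intro x
    have hloc : ∀ y ∈ Set.Ioo (x - L) (x + L), h y = h x := by
      intro y hy
      rcases le_total y x with hc | hc
      · have h1 : h x = h (x - L) := by
          have := hper (x - L); rw [sub_add_cancel] at this; exact this
        have h2 : h (x - L) ≤ h y := hmono hy.1.le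
        have h3 : h y ≤ h x := hmono hc
        linarith
      · have h1 : h (x + L) = h x := hper x
        have h2 : h y ≤ h (x + L) := hmono hy.2.le
        have h3 : h x ≤ h y := hmono hc
        linarith
    have heq : h =ᶠ[nhds x] (fun _ => h x) := by
      filter_upwards [Ioo_mem_nhds (show x - L < x by linarith) (show x < x + L by linarith)] with y hy
      exact hloc y hy
    rw [heq.deriv_eq, deriv_const]
  have key : ∀ x, (1/2) * (h x)^2 + Λ = 0 := fun x => by
    rw [← hode x, hderiv0 x]
  constructor
  · intro x
    have := key x
    nlinarith [sq_nonneg (h x)]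
  · have := key 0
    nlinarith [sq_nonneg (h 0)]
end

section
/- Let ℓ > 0 and suppose h : ℝ → ℝ is a differentiable function defined on all of ℝ satisfying h'(x) = (1/2) h(x)² − 2/ℓ² for all x ∈ ℝ. Then |h(x)| ≤ 2/ℓ for all x ∈ ℝ. -/
/-!
Write `h' = (h - c)(h + c)/2` with `c = 2/ℓ`. This is linear in `h - c` with continuous coefficient
`(h + c)/2`, so `h - c` never changes sign: if `h > c` somewhere, then `h > c` everywhere. On such a
solution `q = (h - c)/(h + c)` lies in `(0, 1)` and satisfies `q' = c q`, so `q` grows exponentially,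
which is absurd. The reflection `x ↦ -h (-x)` solves the same equation and gives the lower bound.
-/

open Real

theorem eq_mul_exp_integral_of_hasDerivAt_eq_mul {w p : ℝ → ℝ} (hp : Continuous p)
    (hw : ∀ x, HasDerivAt w (p x * w x) x) (a x : ℝ) :
    w x = w a * exp (∫ t in a..x, p t) := by
  set P : ℝ → ℝ := fun x => ∫ t in a..x, p t
  have hP : ∀ x, HasDerivAt P (p x) x := fun x => (hp.integral_hasStrictDerivAt a x).hasDerivAt
  have hF : ∀ x, HasDerivAt (fun y => w y * exp (-P y)) 0 x := fun x =>
    ((hw x).mul (hP x).neg.exp).congr_deriv (by ring)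
  have hconst := is_const_of_deriv_eq_zero (fun x => (hF x).differentiableAt)
    (fun x => (hF x).deriv) x a
  simp only [P, intervalIntegral.integral_same, neg_zero, exp_zero, mul_one] at hconst
  rw [← hconst, mul_assoc, ← exp_add, neg_add_cancel, exp_zero, mul_one]

section Riccati

variable {c : ℝ} {h : ℝ → ℝ}

theorem riccati_lt_of_lt (hh : ∀ x, HasDerivAt h ((h x ^ 2 - c ^ 2) / 2) x) {x₀ : ℝ}
    (hx₀ : c < h x₀) (x : ℝ) : c < h x := by
  have hcont : Continuous h := continuous_iff_continuousAt.2 fun x => (hh x).continuousAt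
  have hlin : ∀ x, HasDerivAt (fun y => h y - c) ((h x + c) / 2 * (h x - c)) x := fun x =>
    ((hh x).sub_const c).congr_deriv (by ring)
  have hsol := eq_mul_exp_integral_of_hasDerivAt_eq_mul (by fun_prop) hlin x₀ x
  have hpos : 0 < h x - c := hsol ▸ mul_pos (sub_pos.2 hx₀) (exp_pos _)
  linarith

theorem not_forall_lt_riccati (hc : 0 < c)
    (hh : ∀ x, HasDerivAt h ((h x ^ 2 - c ^ 2) / 2) x) : ¬ ∀ x, c < h x := by
  intro hgt
  have hpos : ∀ x, 0 < h x + c := fun x => by linarith [hgt x]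
  set q : ℝ → ℝ := fun x => (h x - c) / (h x + c)
  have hq : ∀ x, HasDerivAt q (c * q x) x := fun x =>
    (((hh x).sub_const c).div ((hh x).add_const c) (hpos x).ne').congr_deriv <| by
      have := (hpos x).ne'
      simp only [q]
      field_simp
      ring
  have hq_lt_one : ∀ x, q x < 1 := fun x => (div_lt_one (hpos x)).2 (by linarith)
  have hq₀ : 0 < q 0 := div_pos (sub_pos.2 (hgt 0)) (hpos 0)
  have hq_exp : ∀ x, q x = q 0 * exp (c * x) := fun x => by
    simpa [mul_comm] using eq_mul_exp_integral_of_hasDerivAt_eq_mul continuous_const hq 0 x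
  have hgrowth : q 0 + 1 ≤ q (1 / (c * q 0)) := by
    calc q 0 + 1 = q 0 * (c * (1 / (c * q 0)) + 1) := by field_simp; ring
      _ ≤ q 0 * exp (c * (1 / (c * q 0))) := by gcongr; exact add_one_le_exp _
      _ = q (1 / (c * q 0)) := (hq_exp _).symm
  linarith [hq_lt_one (1 / (c * q 0))]

theorem riccati_le (hc : 0 < c) (hh : ∀ x, HasDerivAt h ((h x ^ 2 - c ^ 2) / 2) x) (x : ℝ) :
    h x ≤ c :=
  not_lt.1 fun hx => not_forall_lt_riccati hc hh (riccati_lt_of_lt hh hx)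

theorem riccati_reflect (hh : ∀ x, HasDerivAt h ((h x ^ 2 - c ^ 2) / 2) x) (x : ℝ) :
    HasDerivAt (fun y => -h (-y)) (((-h (-x)) ^ 2 - c ^ 2) / 2) x :=
  ((hh (-x)).comp x (hasDerivAt_neg x)).neg.congr_deriv (by ring)

theorem abs_le_of_riccati (hc : 0 < c) (hh : ∀ x, HasDerivAt h ((h x ^ 2 - c ^ 2) / 2) x)
    (x : ℝ) : |h x| ≤ c := by
  have hlower := riccati_le hc (riccati_reflect hh) (-x)
  rw [neg_neg] at hlower
  exact abs_le.2 ⟨by linarith, riccati_le hc hh x⟩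

end Riccati

theorem stmt_4 (ℓ : ℝ) (hℓ : 0 < ℓ) (h : ℝ → ℝ)
    (hdiff : Differentiable ℝ h)
    (hode : ∀ x : ℝ, deriv h x = (1/2) * (h x)^2 - 2/ℓ^2) :
    ∀ x : ℝ, |h x| ≤ 2/ℓ := by
  have hh : ∀ x, HasDerivAt h ((h x ^ 2 - (2 / ℓ) ^ 2) / 2) x := fun x =>
    (hdiff x).hasDerivAt.congr_deriv (by rw [hode]; ring)
  exact abs_le_of_riccati (by positivity) hh
end

section
/- Let ℓ > 0 and let h, Δ : ℝ → ℝ be smooth functions, both periodic with period L > 0, satisfying Δ'(x) = h(x) Δ(x) and h'(x) = (1/2) h(x)² + 2 Δ(x)² − 2/ℓ² for all x. Then h is constant, h(x)Δ(x) = 0 for all x, and either (h ≡ 0 and Δ ≡ 1/ℓ or Δ ≡ −1/ℓ) or (Δ ≡ 0 and h ≡ 2/ℓ or h ≡ −2/ℓ). -/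
theorem stmt_5 (ℓ : ℝ) (hℓ : 0 < ℓ) (h Δ : ℝ → ℝ)
    (hsmooth : ContDiff ℝ (⊤ : ℕ∞) h) (Δsmooth : ContDiff ℝ (⊤ : ℕ∞) Δ)
    (L : ℝ) (hL : 0 < L)
    (hper : Function.Periodic h L) (Δper : Function.Periodic Δ L)
    (hmax : ∀ x : ℝ, deriv Δ x = h x * Δ x)
    (hode : ∀ x : ℝ, deriv h x = (1/2) * (h x)^2 + 2 * (Δ x)^2 - 2/ℓ^2) :
    (∃ c : ℝ, ∀ x : ℝ, h x = c) ∧ (∀ x : ℝ, h x * Δ x = 0) ∧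
    (((∀ x : ℝ, h x = 0) ∧ ((∀ x : ℝ, Δ x = 1/ℓ) ∨ (∀ x : ℝ, Δ x = -(1/ℓ)))) ∨
     ((∀ x : ℝ, Δ x = 0) ∧ ((∀ x : ℝ, h x = 2/ℓ) ∨ (∀ x : ℝ, h x = -(2/ℓ))))) := by
  have hdiff : Differentiable ℝ h := hsmooth.differentiable (by simp)
  have Δdiff : Differentiable ℝ Δ := Δsmooth.differentiable (by simp)
  have hH : ∀ x, HasDerivAt h ((1/2) * (h x)^2 + 2 * (Δ x)^2 - 2/ℓ^2) x := by
    intro x; rw [← hode x]; exact (hdiff x).hasDerivAt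
  have hD : ∀ x, HasDerivAt Δ (h x * Δ x) x := by
    intro x; rw [← hmax x]; exact (Δdiff x).hasDerivAt
  set φ : ℝ → ℝ := fun x =>
    h x * ((1/2) * (h x)^2 + 2 * (Δ x)^2 - 2/ℓ^2) - (h x)^3 / 3 with hφdef
  have hφ : ∀ x, HasDerivAt φ
      (((1/2) * (h x)^2 + 2 * (Δ x)^2 - 2/ℓ^2)^2 + 4 * (h x * Δ x)^2) x := by
    intro x
    have h1 := hH x
    have h2 := hD x
    have A := (h1.pow 2).const_mul (1/2 : ℝ)
    have B := (h2.pow 2).const_mul (2 : ℝ)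
    have C := (A.add B).sub_const (2/ℓ^2)
    have E := (h1.mul C).sub ((h1.pow 3).div_const 3)
    have E' : HasDerivAt φ _ x := E
    convert E' using 1
    simp only [Pi.add_apply, Pi.pow_apply, Nat.cast_ofNat, show (2:ℕ) - 1 = 1 from rfl,
      show (3:ℕ) - 1 = 2 from rfl]
    ring
  have hφper : Function.Periodic φ L := by
    intro x
    simp only [hφdef, hper x, Δper x]
  have hφmono : Monotone φ := by
    refine monotone_of_deriv_nonneg (fun x => (hφ x).differentiableAt) ?_
    intro x
    rw [(hφ x).deriv]
    positivity
  have hφconst : ∀ x y : ℝ, φ x = φ y := by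
    have key : ∀ x y : ℝ, x ≤ y → φ x = φ y := by
      intro x y hxy
      obtain ⟨n, hn⟩ := exists_nat_ge ((y - x) / L)
      have hy : y ≤ x + n * L := by
        have := (div_le_iff₀ hL).mp hn
        linarith
      have hper' : φ (x + n * L) = φ x := by
        have := (hφper.nat_mul n) x
        simpa [mul_comm] using this
      exact le_antisymm (hφmono hxy) (hper' ▸ hφmono hy)
    intro x y
    rcases le_total x y with hxy | hxy
    · exact key x y hxy
    · exact (key y x hxy).symm
  have hφeq : φ = fun _ => φ 0 := funext fun y => hφconst y 0
  have hzero : ∀ x : ℝ,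
      ((1/2) * (h x)^2 + 2 * (Δ x)^2 - 2/ℓ^2)^2 + 4 * (h x * Δ x)^2 = 0 := by
    intro x
    have := (hφ x).deriv
    rw [hφeq, deriv_const] at this
    linarith
  have hkey : ∀ x : ℝ, ((1/2) * (h x)^2 + 2 * (Δ x)^2 - 2/ℓ^2) = 0 ∧ h x * Δ x = 0 := by
    intro x
    have h0 := hzero x
    constructor <;>
      nlinarith [sq_nonneg ((1/2) * (h x)^2 + 2 * (Δ x)^2 - 2/ℓ^2), sq_nonneg (h x * Δ x)]
  have hderiv0 : ∀ x : ℝ, deriv h x = 0 := fun x => by rw [hode x]; exact (hkey x).1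
  have hconst : ∀ x : ℝ, h x = h 0 := fun x => is_const_of_deriv_eq_zero hdiff hderiv0 x 0
  have hℓ2 : (0:ℝ) < ℓ^2 := by positivity
  refine ⟨⟨h 0, hconst⟩, fun x => (hkey x).2, ?_⟩
  by_cases hc : h 0 = 0
  · -- h ≡ 0, Δ² ≡ 1/ℓ²
    have h0 : ∀ x, h x = 0 := fun x => (hconst x).trans hc
    have hΔsq : ∀ x, (Δ x)^2 = 1/ℓ^2 := by
      intro x
      have := (hkey x).1
      rw [h0 x] at this
      field_simp at this ⊢
      linarith
    have hΔne : ∀ x, Δ x ≠ 0 := by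
      intro x hx
      have := hΔsq x
      rw [hx] at this
      simp at this
      nlinarith
    have hΔval : ∀ x, Δ x = 1/ℓ ∨ Δ x = -(1/ℓ) := by
      intro x
      have h1 : (Δ x - 1/ℓ) * (Δ x + 1/ℓ) = 0 := by
        have := hΔsq x
        field_simp at this ⊢
        nlinarith
      rcases mul_eq_zero.mp h1 with h2 | h2
      · left; linarith
      · right; linarith
    left
    refine ⟨h0, ?_⟩
    -- sign constancy by IVT
    have hsign : ∀ x y : ℝ, Δ x = Δ y := by
      intro x y
      by_contra hne
      rcases hΔval x with hx | hx <;> rcases hΔval y with hy | hy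
      · exact hne (hx.trans hy.symm)
      · have hp : 0 < 1/ℓ := by positivity
        have hmem : (0:ℝ) ∈ Set.uIcc (Δ x) (Δ y) := by
          rw [hx, hy, Set.mem_uIcc]
          right
          constructor <;> linarith
        obtain ⟨c, _, hc0⟩ := intermediate_value_uIcc (Δdiff.continuous.continuousOn) hmem
        exact hΔne c hc0
      · have hp : 0 < 1/ℓ := by positivity
        have hmem : (0:ℝ) ∈ Set.uIcc (Δ x) (Δ y) := by
          rw [hx, hy, Set.mem_uIcc]
          left
          constructor <;> linarith
        obtain ⟨c, _, hc0⟩ := intermediate_value_uIcc (Δdiff.continuous.continuousOn) hmem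
        exact hΔne c hc0
      · exact hne (hx.trans hy.symm)
    rcases hΔval 0 with h1 | h1
    · left; intro x; rw [hsign x 0, h1]
    · right; intro x; rw [hsign x 0, h1]
  · -- h ≡ c ≠ 0, so Δ ≡ 0, c = ±2/ℓ
    have hΔ0 : ∀ x, Δ x = 0 := by
      intro x
      have := (hkey x).2
      rw [hconst x] at this
      exact (mul_eq_zero.mp this).resolve_left hc
    right
    refine ⟨hΔ0, ?_⟩
    have hcsq : (h 0)^2 = 4/ℓ^2 := by
      have := (hkey 0).1
      rw [hΔ0 0] at this
      field_simp at this ⊢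
      linarith
    have h1 : (h 0 - 2/ℓ) * (h 0 + 2/ℓ) = 0 := by
      field_simp at hcsq ⊢
      nlinarith
    rcases mul_eq_zero.mp h1 with h2 | h2
    · left; intro x; rw [hconst x]; linarith
    · right; intro x; rw [hconst x]; linarith
end

section
/- Let ℓ > 0, μ ∈ ℝ, and let h, Δ : ℝ → ℝ be smooth functions, both periodic with period L > 0, satisfying Δ'(x) = (h(x) + μ) Δ(x) and h'(x) = (1/2) h(x)² + 2 Δ(x)² − 2/ℓ² for all x. Then h is constant and Δ(x)(h(x) + μ) = 0 for all x. Moreover, if Δ is not identically zero, then h ≡ −μ, Δ is constant, and Δ² = 1/ℓ² − μ²/4. -/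
open Set Filter Topology

set_option maxHeartbeats 1000000

private lemma aux_per_max {f : ℝ → ℝ} (hc : Continuous f) {L : ℝ} (hL : 0 < L)
    (hp : Function.Periodic f L) : ∃ a, ∀ x, f x ≤ f a := by
  obtain ⟨a, -, hmax⟩ := (isCompact_Icc (a := (0:ℝ)) (b := L)).exists_isMaxOn
    ⟨0, by constructor <;> linarith⟩ hc.continuousOn
  refine ⟨a, fun x => ?_⟩
  obtain ⟨y, hy, hxy⟩ := hp.exists_mem_Ico₀ hL x
  rw [hxy]
  exact hmax (Set.mem_Icc.2 ⟨hy.1, le_of_lt hy.2⟩)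

private lemma aux_per_min {f : ℝ → ℝ} (hc : Continuous f) {L : ℝ} (hL : 0 < L)
    (hp : Function.Periodic f L) : ∃ a, ∀ x, f a ≤ f x := by
  obtain ⟨a, ha⟩ := aux_per_max hc.neg hL (fun x => by simp [hp x])
  exact ⟨a, fun x => by have := ha x; simpa using this⟩

private lemma aux_deriv2_nonpos {f : ℝ → ℝ} {a m : ℝ} (hf : Differentiable ℝ f)
    (hmax : IsLocalMax f a) (hm : HasDerivAt (deriv f) m a) : m ≤ 0 := by
  by_contra hpos
  push_neg at hpos
  have h0 : deriv f a = 0 := hmax.deriv_eq_zero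
  have hslope : Filter.Tendsto (slope (deriv f) a) (𝓝[>] a) (𝓝 m) :=
    (hasDerivAt_iff_tendsto_slope.mp hm).mono_left
      (nhdsWithin_mono a (fun x hx => Set.mem_compl_singleton_iff.mpr (ne_of_gt hx)))
  have h1 : ∀ᶠ x in 𝓝[>] a, 0 < slope (deriv f) a x :=
    hslope.eventually (eventually_gt_nhds hpos)
  have h2 : ∀ᶠ x in 𝓝[>] a, f x ≤ f a := hmax.filter_mono nhdsWithin_le_nhds
  obtain ⟨u, hu, hsub⟩ := mem_nhdsGT_iff_exists_Ioo_subset.mp (h1.and h2)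
  have hau : a < u := hu
  set b := (a + u) / 2 with hbdef
  have hab : a < b := by simp only [hbdef]; linarith
  have hbu : b < u := by simp only [hbdef]; linarith
  have hmono : StrictMonoOn f (Set.Icc a b) := by
    apply strictMonoOn_of_deriv_pos (convex_Icc a b) hf.continuous.continuousOn
    intro x hx
    rw [interior_Icc] at hx
    have hx' : x ∈ Set.Ioo a u := ⟨hx.1, lt_trans hx.2 hbu⟩
    have hs := (hsub hx').1
    rw [slope_def_field, h0, sub_zero] at hs
    have hxa : 0 < x - a := sub_pos.2 hx.1
    have := mul_pos hs hxa
    rwa [div_mul_cancel₀ _ (ne_of_gt hxa)] at this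
  have hfab : f a < f b :=
    hmono (Set.left_mem_Icc.2 (le_of_lt hab)) (Set.right_mem_Icc.2 (le_of_lt hab)) hab
  have hfba : f b ≤ f a := (hsub ⟨hab, hbu⟩).2
  linarith

private lemma aux_deriv2_nonneg {f : ℝ → ℝ} {a m : ℝ} (hf : Differentiable ℝ f)
    (hmin : IsLocalMin f a) (hm : HasDerivAt (deriv f) m a) : 0 ≤ m := by
  have hneg : HasDerivAt (deriv (fun x => -f x)) (-m) a := by
    have hd : deriv (fun x => -f x) = fun x => -deriv f x := funext fun x => deriv.neg
    rw [hd]; exact hm.neg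
  have := aux_deriv2_nonpos hf.neg hmin.neg hneg
  linarith

private lemma aux_anti_per {f : ℝ → ℝ} {L : ℝ} (hL : 0 < L) (ha : Antitone f)
    (hp : Function.Periodic f L) : ∀ x, f x = f 0 := by
  intro x
  obtain ⟨y, hy, hxy⟩ := hp.exists_mem_Ico₀ hL x
  rw [hxy]
  have h1 : f y ≤ f 0 := ha hy.1
  have h2 : f L ≤ f y := ha (le_of_lt hy.2)
  have h3 : f L = f 0 := by simpa using hp 0
  linarith

theorem stmt_6 (ℓ μ : ℝ) (hℓ : 0 < ℓ) (h Δ : ℝ → ℝ)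
    (hsmooth : ContDiff ℝ (⊤ : ℕ∞) h) (Δsmooth : ContDiff ℝ (⊤ : ℕ∞) Δ)
    (L : ℝ) (hL : 0 < L)
    (hper : Function.Periodic h L) (Δper : Function.Periodic Δ L)
    (hmax : ∀ x : ℝ, deriv Δ x = (h x + μ) * Δ x)
    (hode : ∀ x : ℝ, deriv h x = (1/2) * (h x)^2 + 2 * (Δ x)^2 - 2/ℓ^2) :
    (∃ c : ℝ, ∀ x : ℝ, h x = c) ∧ (∀ x : ℝ, Δ x * (h x + μ) = 0) ∧
    (¬ (∀ x : ℝ, Δ x = 0) →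
      (∀ x : ℝ, h x = -μ) ∧ (∃ d : ℝ, (∀ x : ℝ, Δ x = d) ∧ d^2 = 1/ℓ^2 - μ^2/4)) := by
  have hdh : Differentiable ℝ h := hsmooth.differentiable (by simp)
  have hdΔ : Differentiable ℝ Δ := Δsmooth.differentiable (by simp)
  have hℓ' : ℓ ≠ 0 := ne_of_gt hℓ
  set k : ℝ := 2/ℓ with hk
  have hkpos : 0 < k := by positivity
  have hk2 : 2/ℓ^2 = k^2/2 := by rw [hk]; field_simp
  have hk4 : 1/ℓ^2 = k^2/4 := by rw [hk]; field_simp; ring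
  have hode' : ∀ x : ℝ, deriv h x = 1/2 * (h x)^2 + 2 * (Δ x)^2 - k^2/2 :=
    fun x => by rw [hode x, hk2]
  by_cases hz : ∀ x, Δ x = 0
  · -- Case A : Δ ≡ 0
    obtain ⟨a, ha⟩ := aux_per_max hsmooth.continuous hL hper
    obtain ⟨b, hb⟩ := aux_per_min hsmooth.continuous hL hper
    have hla : IsLocalMax h a := Filter.Eventually.of_forall ha
    have hlb : IsLocalMin h b := Filter.Eventually.of_forall hb
    have hda : deriv h a = 0 := hla.deriv_eq_zero
    have hdb : deriv h b = 0 := hlb.deriv_eq_zero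
    have ea : (h a)^2 = k^2 := by
      have t := hode' a; rw [hda, hz a] at t; nlinarith [t]
    have eb : (h b)^2 = k^2 := by
      have t := hode' b; rw [hdb, hz b] at t; nlinarith [t]
    have hha : h a ≤ k := by nlinarith [sq_nonneg (h a - k)]
    have hhb : -k ≤ h b := by nlinarith [sq_nonneg (h b + k)]
    have hmono : ∀ x, deriv h x ≤ 0 := by
      intro x
      have t := hode' x
      rw [hz x] at t
      have h1 : h x ≤ k := le_trans (ha x) hha
      have h2 : -k ≤ h x := le_trans hhb (hb x)
      nlinarith [t]
    have hant : Antitone h := antitone_of_deriv_nonpos hdh hmono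
    have hc : ∀ x, h x = h 0 := aux_anti_per hL hant hper
    exact ⟨⟨h 0, hc⟩, fun x => by rw [hz x]; ring, fun H => (H hz).elim⟩
  · -- Case B : Δ not identically zero
    push_neg at hz
    obtain ⟨x₀, hx₀⟩ := hz
    set g : ℝ → ℝ := fun x => h x + μ with hgdef
    have hgc : Continuous g := hsmooth.continuous.add continuous_const
    set G : ℝ → ℝ := fun x => ∫ t in (0:ℝ)..x, g t with hGdef
    have hG : ∀ x, HasDerivAt G (g x) x := fun x =>
      intervalIntegral.integral_hasDerivAt_right (hgc.intervalIntegrable _ _)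
        (hgc.stronglyMeasurableAtFilter _ _) hgc.continuousAt
    set F : ℝ → ℝ := fun x => Δ x * Real.exp (-G x) with hFdef
    have hF : ∀ x, HasDerivAt F 0 x := by
      intro x
      have h1 : HasDerivAt (fun y => Real.exp (-G y)) (Real.exp (-G x) * -(g x)) x :=
        ((hG x).neg).exp
      have h2 := ((hdΔ x).hasDerivAt).mul h1
      have hval : deriv Δ x * Real.exp (-G x) + Δ x * (Real.exp (-G x) * -(g x)) = 0 := by
        rw [hmax x]; simp only [hgdef]; ring
      rw [hval] at h2
      exact h2
    have hFdiff : Differentiable ℝ F := fun y => (hF y).differentiableAt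
    have hFc : ∀ x, F x = F x₀ := fun x =>
      is_const_of_deriv_eq_zero hFdiff (fun y => (hF y).deriv) x x₀
    have hΔne : ∀ x, Δ x ≠ 0 := by
      intro x hx
      have h1 : Δ x₀ * Real.exp (-G x₀) = 0 := by
        have := hFc x
        simp only [hFdef, hx, zero_mul] at this
        exact this.symm
      rcases mul_eq_zero.mp h1 with h2 | h2
      · exact hx₀ h2
      · exact Real.exp_ne_zero _ h2
    set φ : ℝ → ℝ := fun x => (Δ x)^2 with hφdef
    have hφpos : ∀ x, 0 < φ x := fun x =>
      lt_of_le_of_ne (sq_nonneg _) (Ne.symm (pow_ne_zero 2 (hΔne x)))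
    have hφd : ∀ x, HasDerivAt φ (2 * g x * φ x) x := by
      intro x
      have h1 := ((hdΔ x).hasDerivAt).pow 2
      have hval : (2:ℕ) * Δ x ^ (2 - 1) * deriv Δ x = 2 * g x * φ x := by
        rw [hmax x]; simp only [hgdef, hφdef]; push_cast; ring
      rw [hval] at h1
      exact h1
    have hφper : Function.Periodic φ L := fun x => by simp only [hφdef, Δper x]
    have hφcont : Continuous φ := Δsmooth.continuous.pow 2
    have hφdiff : Differentiable ℝ φ := fun x => (hφd x).differentiableAt
    have hgd : ∀ x, HasDerivAt g (deriv h x) x := fun x => ((hdh x).hasDerivAt).add_const μ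
    have hderφ : deriv φ = fun x => 2 * (g x * φ x) := funext fun x => by
      rw [(hφd x).deriv]; ring
    have hd2 : ∀ x, HasDerivAt (deriv φ)
        (2 * (deriv h x * φ x + g x * (2 * g x * φ x))) x := by
      intro x
      have hprod := (hgd x).mul (hφd x)
      rw [hderφ]
      exact hprod.const_mul 2
    obtain ⟨a, hamax⟩ := aux_per_max hφcont hL hφper
    obtain ⟨b, hbmin⟩ := aux_per_min hφcont hL hφper
    have hla : IsLocalMax φ a := Filter.Eventually.of_forall hamax
    have hlb : IsLocalMin φ b := Filter.Eventually.of_forall hbmin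
    -- g vanishes at extrema
    have hgext : ∀ y, deriv φ y = 0 → g y = 0 := by
      intro y hy
      have := (hφd y).deriv
      rw [hy] at this
      have hp := hφpos y
      rcases mul_eq_zero.mp this.symm with h2 | h2
      · rcases mul_eq_zero.mp h2 with h3 | h3
        · norm_num at h3
        · exact h3
      · exact absurd h2 (ne_of_gt hp)
    have hga : g a = 0 := hgext a hla.deriv_eq_zero
    have hgb : g b = 0 := hgext b hlb.deriv_eq_zero
    have h2a := aux_deriv2_nonpos hφdiff hla (hd2 a)
    have h2b := aux_deriv2_nonneg hφdiff hlb (hd2 b)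
    rw [hga] at h2a
    rw [hgb] at h2b
    have hdha : deriv h a ≤ 0 := by have := hφpos a; nlinarith
    have hdhb : 0 ≤ deriv h b := by have := hφpos b; nlinarith
    have hhaval : h a = -μ := by have := hga; simp only [hgdef] at this; linarith
    have hhbval : h b = -μ := by have := hgb; simp only [hgdef] at this; linarith
    have hKa : φ a ≤ k^2/4 - μ^2/4 := by
      have t := hode' a; rw [hhaval] at t
      have hφa : φ a = (Δ a)^2 := rfl
      rw [hφa]; nlinarith [t]
    have hKb : k^2/4 - μ^2/4 ≤ φ b := by
      have t := hode' b; rw [hhbval] at t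
      have hφb : φ b = (Δ b)^2 := rfl
      rw [hφb]; nlinarith [t]
    have hφconst : ∀ x, φ x = k^2/4 - μ^2/4 := fun x =>
      le_antisymm (le_trans (hamax x) hKa) (le_trans hKb (hbmin x))
    have hgzero : ∀ x, g x = 0 := by
      intro x
      apply hgext x
      have hcf : φ = fun _ => k^2/4 - μ^2/4 := funext hφconst
      rw [hcf]
      exact deriv_const x _
    have hh : ∀ x, h x = -μ := fun x => by
      have := hgzero x; simp only [hgdef] at this; linarith
    have hΔd0 : ∀ x, deriv Δ x = 0 := fun x => by
      rw [hmax x, hh x]; ring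
    have hΔconst : ∀ x, Δ x = Δ 0 := fun x =>
      is_const_of_deriv_eq_zero hdΔ hΔd0 x 0
    refine ⟨⟨-μ, hh⟩, fun x => by rw [hh x]; ring,
      fun _ => ⟨hh, ⟨Δ 0, hΔconst, by rw [hk4]; have := hφconst 0; simpa [hφdef] using this⟩⟩⟩
end

section
/- Let k ≠ 0 and let Γ : ℝ → ℝ be a smooth, everywhere positive function satisfying 2 Γ(x) Γ''(x) = Γ'(x)² + k² for all x ∈ ℝ. Then there exist β > 0 and x₀ ∈ ℝ such that Γ(x) = k²/β + (β/4)(x − x₀)² for all x. -/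
theorem stmt_8 (k : ℝ) (hk : k ≠ 0) (Γ : ℝ → ℝ)
    (hsmooth : ContDiff ℝ (⊤ : ℕ∞) Γ) (hpos : ∀ x : ℝ, 0 < Γ x)
    (hode : ∀ x : ℝ, 2 * Γ x * deriv (deriv Γ) x = (deriv Γ x)^2 + k^2) :
    ∃ β x₀ : ℝ, 0 < β ∧ ∀ x : ℝ, Γ x = k^2/β + (β/4) * (x - x₀)^2 := by
  have hsm : ContDiff ℝ ((⊤ : ℕ∞) : WithTop ℕ∞) Γ := hsmooth.of_le (by simp)
  obtain ⟨hd0, hs1⟩ := contDiff_infty_iff_deriv.mp hsm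
  obtain ⟨hd1, hs2⟩ := contDiff_infty_iff_deriv.mp hs1
  obtain ⟨hd2, hs3⟩ := contDiff_infty_iff_deriv.mp hs2
  -- third derivative vanishes
  have key : ∀ x, deriv (deriv (deriv Γ)) x = 0 := by
    intro x
    have hA : HasDerivAt Γ (deriv Γ x) x := (hd0 x).hasDerivAt
    have hB : HasDerivAt (deriv Γ) (deriv (deriv Γ) x) x := (hd1 x).hasDerivAt
    have hC : HasDerivAt (deriv (deriv Γ)) (deriv (deriv (deriv Γ)) x) x := (hd2 x).hasDerivAt
    have hL : HasDerivAt (fun y => 2 * Γ y * deriv (deriv Γ) y)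
        (2 * deriv Γ x * deriv (deriv Γ) x + 2 * Γ x * deriv (deriv (deriv Γ)) x) x := by
      have := (hA.const_mul 2).mul hC
      simpa [Pi.mul_def, mul_comm, mul_assoc, mul_left_comm] using this
    have hR : HasDerivAt (fun y => (deriv Γ y)^2 + k^2)
        (2 * deriv Γ x * deriv (deriv Γ) x) x := by
      have := (hB.pow 2).add_const (k^2)
      simpa [mul_comm, mul_assoc] using this
    have hfe : (fun y => 2 * Γ y * deriv (deriv Γ) y) = fun y => (deriv Γ y)^2 + k^2 :=
      funext hode
    rw [hfe] at hL
    have := hL.unique hR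
    have h0 : (2 * Γ x) * deriv (deriv (deriv Γ)) x = 0 := by linarith
    rcases mul_eq_zero.mp h0 with h | h
    · exact absurd h (by have := (hpos x); positivity)
    · exact h
  -- second derivative is a constant c
  set c : ℝ := deriv (deriv Γ) 0 with hc
  have h2const : ∀ x, deriv (deriv Γ) x = c := by
    intro x
    exact is_const_of_deriv_eq_zero hd2 key x 0
  set b : ℝ := deriv Γ 0 with hb
  have h1lin : ∀ x, deriv Γ x = c * x + b := by
    intro x
    have hder : ∀ y, deriv (fun z => deriv Γ z - (c * z + b)) y = 0 := by
      intro y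
      have hB : HasDerivAt (deriv Γ) (deriv (deriv Γ) y) y := (hd1 y).hasDerivAt
      have hlin : HasDerivAt (fun z : ℝ => c * z + b) c y := by
        simpa using ((hasDerivAt_id y).const_mul c).add_const b
      have := (hB.sub hlin).deriv
      rw [show (fun z => deriv Γ z - (c * z + b)) = deriv Γ - fun z => c * z + b from rfl, this, h2const y]; ring
    have hdiff : Differentiable ℝ (fun z => deriv Γ z - (c * z + b)) := by
      exact hd1.sub (by fun_prop)
    have := is_const_of_deriv_eq_zero hdiff hder x 0
    simp at this
    linarith [this]
  set c0 : ℝ := Γ 0 with hc0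
  have hquad : ∀ x, Γ x = c/2 * x^2 + b * x + c0 := by
    intro x
    have hder : ∀ y, deriv (fun z => Γ z - (c/2 * z^2 + b * z + c0)) y = 0 := by
      intro y
      have hA : HasDerivAt Γ (deriv Γ y) y := (hd0 y).hasDerivAt
      have hq : HasDerivAt (fun z : ℝ => c/2 * z^2 + b * z + c0) (c * y + b) y := by
        have h1 : HasDerivAt (fun z : ℝ => c/2 * z^2) (c * y) y := by
          have := ((hasDerivAt_pow 2 y).const_mul (c/2))
          simpa [mul_comm, mul_assoc] using this.congr_deriv (by push_cast; ring)
        have h2 : HasDerivAt (fun z : ℝ => b * z) b y := by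
          simpa using (hasDerivAt_id y).const_mul b
        simpa using (h1.add h2).add_const c0
      have := (hA.sub hq).deriv
      rw [show (fun z => Γ z - (c/2 * z^2 + b * z + c0)) = Γ - fun z => c/2 * z^2 + b * z + c0 from rfl, this, h1lin y]; ring
    have hdiff : Differentiable ℝ (fun z => Γ z - (c/2 * z^2 + b * z + c0)) := by
      exact hd0.sub (by fun_prop)
    have := is_const_of_deriv_eq_zero hdiff hder x 0
    simp at this
    linarith [this]
  -- relation at 0
  have hrel : 2 * c0 * c = b^2 + k^2 := hode 0
  have hcpos : 0 < c := by
    nlinarith [hpos 0, sq_nonneg b, sq_nonneg k, show (0:ℝ) < k^2 by positivity]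
  refine ⟨2 * c, -b / c, by linarith, fun x => ?_⟩
  rw [hquad x]
  have hcne : c ≠ 0 := ne_of_gt hcpos
  field_simp
  nlinarith [hrel]
end

section
/- Let c > 0 and define F : (0,1) → ℝ by F(x) = 4x(3 + x²)/(3 + 6x² − x⁴) + 8c(3 − x²)x/((1 − x²)(3 + 6x² − x⁴)). Then F is continuous and positive on (0,1), F(x) → 0 as x → 0⁺, and F(x) → +∞ as x → 1⁻. Consequently, for every integer m ≥ 1 there exists x₁ ∈ (0,1) with F(x₁) = m. -/
/-!
Both denominators are positive on `(0, 1)`, so `F` is continuous and positive there, and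
`F 0 = 0` with `F` continuous at `0`. Near `1` the first summand tends to `2` and the second
is `(8c(3 - x²)x / (3 + 6x² - x⁴)) · (1 - x²)⁻¹`, a factor tending to `2c > 0` times one tending
to `+∞`. The intermediate value theorem on the connected set `(0, 1)` then hits every value in
`(0, ∞)`, in particular every positive integer.
-/

open Filter Set Topology

noncomputable def chargedPageF (c x : ℝ) : ℝ :=
  4 * x * (3 + x ^ 2) / (3 + 6 * x ^ 2 - x ^ 4)
    + 8 * c * (3 - x ^ 2) * x / ((1 - x ^ 2) * (3 + 6 * x ^ 2 - x ^ 4))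

lemma three_add_six_mul_sq_sub_pow_four_pos {x : ℝ} (hx : x ^ 2 ≤ 6) :
    0 < 3 + 6 * x ^ 2 - x ^ 4 := by
  nlinarith [sq_nonneg x]

lemma one_sub_sq_pos_of_mem_Ioo {x : ℝ} (hx : x ∈ Ioo (0 : ℝ) 1) : 0 < 1 - x ^ 2 := by
  nlinarith [hx.1, hx.2]

lemma three_add_six_mul_sq_sub_pow_four_pos_of_mem_Ioo {x : ℝ} (hx : x ∈ Ioo (0 : ℝ) 1) :
    0 < 3 + 6 * x ^ 2 - x ^ 4 :=
  three_add_six_mul_sq_sub_pow_four_pos (by linarith [one_sub_sq_pos_of_mem_Ioo hx])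

lemma continuousOn_chargedPageF (c : ℝ) : ContinuousOn (chargedPageF c) (Ioo 0 1) := by
  unfold chargedPageF
  fun_prop (disch := first
    | exact fun x hx => (three_add_six_mul_sq_sub_pow_four_pos_of_mem_Ioo hx).ne'
    | exact fun x hx => (mul_pos (one_sub_sq_pos_of_mem_Ioo hx)
        (three_add_six_mul_sq_sub_pow_four_pos_of_mem_Ioo hx)).ne')

lemma chargedPageF_pos {c x : ℝ} (hc : 0 ≤ c) (hx : x ∈ Ioo (0 : ℝ) 1) :
    0 < chargedPageF c x := by
  have hx0 := hx.1
  have hd := three_add_six_mul_sq_sub_pow_four_pos_of_mem_Ioo hx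
  have h1 := one_sub_sq_pos_of_mem_Ioo hx
  have h3 : 0 < 3 - x ^ 2 := by linarith
  unfold chargedPageF
  refine add_pos_of_pos_of_nonneg (by positivity) (div_nonneg ?_ (mul_pos h1 hd).le)
  positivity

lemma tendsto_chargedPageF_zero (c : ℝ) :
    Tendsto (chargedPageF c) (𝓝[Ioo 0 1] 0) (𝓝 0) := by
  have hcont : ContinuousAt (chargedPageF c) 0 := by
    unfold chargedPageF
    fun_prop (disch := norm_num)
  simpa [chargedPageF] using hcont.tendsto.mono_left nhdsWithin_le_nhds

lemma tendsto_inv_one_sub_sq_nhdsLT_one :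
    Tendsto (fun x : ℝ => (1 - x ^ 2)⁻¹) (𝓝[<] 1) atTop := by
  refine Tendsto.inv_tendsto_nhdsGT_zero (tendsto_nhdsWithin_iff.2 ⟨?_, ?_⟩)
  · have hcont : ContinuousAt (fun x : ℝ => 1 - x ^ 2) 1 := by fun_prop
    simpa using hcont.tendsto.mono_left nhdsWithin_le_nhds
  · filter_upwards [Ioo_mem_nhdsLT (neg_one_lt_zero.trans zero_lt_one)] with x hx
    simp only [mem_Ioi, sub_pos, sq_lt_one_iff_abs_lt_one, abs_lt]
    exact hx

lemma tendsto_chargedPageF_one {c : ℝ} (hc : 0 < c) :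
    Tendsto (chargedPageF c) (𝓝[Ioo 0 1] 1) atTop := by
  have hfirst : Tendsto (fun x : ℝ => 4 * x * (3 + x ^ 2) / (3 + 6 * x ^ 2 - x ^ 4))
      (𝓝[<] 1) (𝓝 2) := by
    have hcont : ContinuousAt (fun x : ℝ => 4 * x * (3 + x ^ 2) / (3 + 6 * x ^ 2 - x ^ 4)) 1 := by
      fun_prop (disch := norm_num)
    convert hcont.tendsto.mono_left nhdsWithin_le_nhds using 2
    norm_num
  have hfactor : Tendsto (fun x : ℝ => 8 * c * (3 - x ^ 2) * x / (3 + 6 * x ^ 2 - x ^ 4))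
      (𝓝[<] 1) (𝓝 (2 * c)) := by
    have hcont : ContinuousAt (fun x : ℝ => 8 * c * (3 - x ^ 2) * x / (3 + 6 * x ^ 2 - x ^ 4))
        1 := by
      fun_prop (disch := norm_num)
    convert hcont.tendsto.mono_left nhdsWithin_le_nhds using 2
    ring
  have hsum := hfirst.add_atTop
    (hfactor.pos_mul_atTop (by positivity) tendsto_inv_one_sub_sq_nhdsLT_one)
  refine (hsum.mono_left (nhdsWithin_mono _ Ioo_subset_Iio_self)).congr fun x => ?_
  simp only [chargedPageF, div_eq_mul_inv, mul_inv]
  ring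

theorem stmt_13 (c : ℝ) (hc : 0 < c)
    (F : ℝ → ℝ)
    (hF : ∀ x : ℝ, F x = 4*x*(3 + x^2)/(3 + 6*x^2 - x^4)
        + 8*c*(3 - x^2)*x/((1 - x^2)*(3 + 6*x^2 - x^4))) :
    ContinuousOn F (Set.Ioo (0:ℝ) 1) ∧
    (∀ x ∈ Set.Ioo (0:ℝ) 1, 0 < F x) ∧
    Filter.Tendsto F (nhdsWithin 0 (Set.Ioo (0:ℝ) 1)) (nhds 0) ∧
    Filter.Tendsto F (nhdsWithin 1 (Set.Ioo (0:ℝ) 1)) Filter.atTop ∧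
    (∀ m : ℕ, 1 ≤ m → ∃ x₁ ∈ Set.Ioo (0:ℝ) 1, F x₁ = m) := by
  obtain rfl : F = chargedPageF c := funext hF
  have hcont := continuousOn_chargedPageF c
  have h0 := tendsto_chargedPageF_zero c
  have h1 := tendsto_chargedPageF_one hc
  refine ⟨hcont, fun x hx => chargedPageF_pos hc.le hx, h0, h1, fun m hm => ?_⟩
  have := left_nhdsWithin_Ioo_neBot (zero_lt_one' ℝ)
  have := right_nhdsWithin_Ioo_neBot (zero_lt_one' ℝ)
  exact isPreconnected_Ioo.intermediate_value_Ioi (l₁ := 𝓝[Ioo 0 1] 0) (l₂ := 𝓝[Ioo 0 1] 1)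
    inf_le_right inf_le_right hcont h0 h1
    (show (0 : ℝ) < m by exact_mod_cast hm)
end

section
/- Let Λ ≤ 0, A₀ ∈ ℝ, and let ψ : ℝ → ℝ be a smooth, everywhere positive, periodic function (with period L > 0) satisfying (ψ²)''(x) + 2Λ ψ(x)² = 2A₀ for all x. Then ψ is constant; moreover if Λ = 0 then A₀ = 0, and if Λ < 0 then A₀ = Λ ψ² ≤ 0. -/
open Set Filter Topology
open scoped ContDiff

/-- Second derivative test at a global maximum. -/
lemma sd_max_aux {f : ℝ → ℝ} (hf : ContDiff ℝ ∞ f) {a : ℝ}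
    (hmax : ∀ x, f x ≤ f a) : deriv (deriv f) a ≤ 0 := by
  by_contra h
  push_neg at h
  have hd : Differentiable ℝ f := hf.differentiable (by simp)
  have hd2 : ContDiff ℝ ∞ (deriv f) := (contDiff_infty_iff_deriv.mp hf).2
  have hd2' : Differentiable ℝ (deriv f) := hd2.differentiable (by simp)
  have hda : deriv f a = 0 := by
    have : IsLocalMax f a := Filter.Eventually.of_forall hmax
    exact this.deriv_eq_zero
  have hslope : Filter.Tendsto (slope (deriv f) a) (𝓝[≠] a) (𝓝 (deriv (deriv f) a)) :=
    hasDerivAt_iff_tendsto_slope.mp (hd2' a).hasDerivAt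
  have hev : ∀ᶠ y in 𝓝[>] a, 0 < deriv f y := by
    have h1 : ∀ᶠ y in 𝓝[≠] a, 0 < slope (deriv f) a y :=
      hslope.eventually (eventually_gt_nhds h)
    have h2 : ∀ᶠ y in 𝓝[>] a, 0 < slope (deriv f) a y :=
      h1.filter_mono (nhdsWithin_mono a fun y hy => ne_of_gt hy)
    have h3 : ∀ᶠ y in 𝓝[>] a, a < y := eventually_mem_nhdsWithin
    filter_upwards [h2, h3] with y hy hay
    rw [slope_def_field, hda, sub_zero] at hy
    rcases div_pos_iff.mp hy with ⟨hnum, _⟩ | ⟨_, hden⟩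
    · exact hnum
    · linarith
  obtain ⟨b, hb, hsub⟩ := mem_nhdsGT_iff_exists_Ioc_subset.mp hev
  have hmono : StrictMonoOn f (Set.Icc a b) :=
    strictMonoOn_of_deriv_pos (convex_Icc a b) hd.continuous.continuousOn
      (fun x hx => by
        rw [interior_Icc] at hx
        exact hsub ⟨hx.1, hx.2.le⟩)
  have hab : a < b := hb
  have : f a < f b :=
    hmono (left_mem_Icc.2 hab.le) (right_mem_Icc.2 hab.le) hab
  exact absurd (hmax b) (not_le.2 this)

/-- Second derivative test at a global minimum. -/
lemma sd_min_aux {f : ℝ → ℝ} (hf : ContDiff ℝ ∞ f) {a : ℝ}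
    (hmin : ∀ x, f a ≤ f x) : 0 ≤ deriv (deriv f) a := by
  have h := sd_max_aux (f := fun x => -f x) hf.neg (fun x => neg_le_neg (hmin x))
  have e1 : (deriv fun x => -f x) = fun x => -deriv f x := funext fun x => deriv.neg
  rw [e1] at h
  have e2 : deriv (fun x => -deriv f x) a = -deriv (deriv f) a := deriv.neg
  rw [e2] at h
  linarith

theorem stmt_18 (Λ A₀ : ℝ) (hΛ : Λ ≤ 0) (ψ : ℝ → ℝ)
    (hsmooth : ContDiff ℝ (⊤ : ℕ∞) ψ) (hpos : ∀ x : ℝ, 0 < ψ x)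
    (L : ℝ) (hL : 0 < L) (hper : Function.Periodic ψ L)
    (hode : ∀ x : ℝ, deriv (deriv (fun y => ψ y ^ 2)) x + 2 * Λ * (ψ x)^2 = 2 * A₀) :
    (∀ x y : ℝ, ψ x = ψ y) ∧
    (Λ = 0 → A₀ = 0) ∧
    (Λ < 0 → (∀ x : ℝ, A₀ = Λ * (ψ x)^2) ∧ A₀ ≤ 0) := by
  set f : ℝ → ℝ := fun y => ψ y ^ 2 with hfdef
  have hfc : ContDiff ℝ ∞ f := (hsmooth.pow 2).of_le (by simp)
  have hfper : Function.Periodic f L := fun x => by simp only [hfdef, hper x]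
  have hfd : Differentiable ℝ f := hfc.differentiable (by simp)
  have hfd2 : ContDiff ℝ ∞ (deriv f) := (contDiff_infty_iff_deriv.mp hfc).2
  have hfd2' : Differentiable ℝ (deriv f) := hfd2.differentiable (by simp)
  -- global max and min
  obtain ⟨x₀, _, hx₀⟩ := isCompact_Icc.exists_isMaxOn (nonempty_Icc.2 hL.le)
    hfc.continuous.continuousOn
  obtain ⟨x₁, _, hx₁⟩ := isCompact_Icc.exists_isMinOn (nonempty_Icc.2 hL.le)
    hfc.continuous.continuousOn
  have hmax : ∀ x, f x ≤ f x₀ := by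
    intro x
    obtain ⟨y, hy, hxy⟩ := hfper.exists_mem_Ico₀ hL x
    rw [hxy]
    exact hx₀ (Ico_subset_Icc_self hy)
  have hmin : ∀ x, f x₁ ≤ f x := by
    intro x
    obtain ⟨y, hy, hxy⟩ := hfper.exists_mem_Ico₀ hL x
    rw [hxy]
    exact hx₁ (Ico_subset_Icc_self hy)
  have h2 : ∀ x, deriv (deriv f) x = 2 * A₀ - 2 * Λ * f x := by
    intro x
    have := hode x
    simp only [hfdef] at this ⊢
    linarith
  have hAmax : A₀ ≤ Λ * f x₀ := by
    have := sd_max_aux hfc hmax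
    rw [h2 x₀] at this
    linarith
  have hAmin : Λ * f x₁ ≤ A₀ := by
    have := sd_min_aux hfc hmin
    rw [h2 x₁] at this
    linarith
  -- show f is constant in both cases
  have hfconst : ∀ x, f x = f x₀ := by
    rcases lt_or_eq_of_le hΛ with hΛlt | hΛeq
    · -- Λ < 0
      have h01 : f x₀ ≤ f x₁ := by
        have hmul : Λ * f x₁ ≤ Λ * f x₀ := le_trans hAmin hAmax
        nlinarith
      intro x
      exact le_antisymm (hmax x) (le_trans h01 (hmin x))
    · -- Λ = 0
      subst hΛeq
      have hA0 : A₀ = 0 := by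
        simp only [neg_zero, zero_mul] at hAmax hAmin
        linarith
      have hdd : ∀ x, deriv (deriv f) x = 0 := by
        intro x
        rw [h2 x, hA0]
        ring
      have hdc : ∀ x y, deriv f x = deriv f y := is_const_of_deriv_eq_zero hfd2' hdd
      set c : ℝ := deriv f 0 with hc
      have hgd : Differentiable ℝ (fun x => f x - c * x) :=
        hfd.sub ((differentiable_id.const_mul c))
      have hgd' : ∀ x, deriv (fun x => f x - c * x) x = 0 := by
        intro x
        have h1 : HasDerivAt (fun x => c * x) c x := by
          simpa using (hasDerivAt_id x).const_mul c
        have h2' : HasDerivAt (fun x => f x - c * x) (deriv f x - c) x :=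
          ((hfd x).hasDerivAt).sub h1
        rw [h2'.deriv, hdc x 0, ← hc, sub_self]
      have hgl := is_const_of_deriv_eq_zero hgd hgd' L 0
      have hfL : f L = f 0 := by
        have := hfper 0
        simpa using this
      have hc0 : c = 0 := by
        simp only [hfL, mul_zero, sub_zero] at hgl
        have : c * L = 0 := by linarith
        rcases mul_eq_zero.mp this with h | h
        · exact h
        · exact absurd h hL.ne'
      have hdzero : ∀ x, deriv f x = 0 := by
        intro x
        rw [hdc x 0, ← hc, hc0]
      exact fun x => is_const_of_deriv_eq_zero hfd hdzero x x₀
  have hψconst : ∀ x y : ℝ, ψ x = ψ y := by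
    intro x y
    have hx : ψ x = Real.sqrt (f x) := (Real.sqrt_sq (hpos x).le).symm
    have hy : ψ y = Real.sqrt (f y) := (Real.sqrt_sq (hpos y).le).symm
    rw [hx, hy, hfconst x, hfconst y]
  refine ⟨hψconst, ?_, ?_⟩
  · -- Λ = 0 → A₀ = 0
    intro hΛ0
    subst hΛ0
    simp only [zero_mul] at hAmax hAmin
    linarith
  · -- Λ < 0
    intro hΛlt
    have hfun : f = fun _ => f x₀ := funext hfconst
    have hddz : ∀ x, deriv (deriv f) x = 0 := by
      intro x
      rw [hfun]
      simp
    have hAeq : ∀ x : ℝ, A₀ = Λ * (ψ x) ^ 2 := by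
      intro x
      have := h2 x
      rw [hddz x] at this
      have hfx : f x = ψ x ^ 2 := rfl
      rw [hfx] at this
      linarith
    refine ⟨hAeq, ?_⟩
    have := hAeq 0
    nlinarith [hpos 0, sq_nonneg (ψ 0)]
end
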